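/- Let a ∈ (-1,1), s = (1-a)/2, and define w : ℝ² → ℝ by w(x,y) = (√(x² + y²) - x)^s. Then w satisfies the equation ∂_x(|y|^a ∂_x w) + ∂_y(|y|^a ∂_y w) = 0 at every point (x,y) with y ≠ 0. -/

import Mathlib

/-!
Write r = √(x² + y²) and u = r - x, so that w = u^s. Since ∂ₓu = -u/r and ∂ᵧu = y/r, the first
derivatives are ∂ₓw = -s u^s / r and ∂ᵧw = s y u^(s-1) / r. Differentiating the weighted fluxes once
more gives ± |y|^a s u^s (s r + x) / r³ for the two terms, the sign flip using u (r + x) = y² and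
a = 1 - 2s.
-/

open Topology

theorem sqrt_sq_add_sq_sub_pos {y : ℝ} (hy : y ≠ 0) (x : ℝ) : 0 < √(x ^ 2 + y ^ 2) - x := by
  have hlt : √(x ^ 2) < √(x ^ 2 + y ^ 2) :=
    Real.sqrt_lt_sqrt (sq_nonneg x) (by linarith [pow_pos (abs_pos.2 hy) 2, sq_abs y])
  linarith [Real.sqrt_sq_eq_abs x, le_abs_self x]

theorem hasDerivAt_abs_rpow_of_ne_zero (a : ℝ) {y : ℝ} (hy : y ≠ 0) :
    HasDerivAt (fun t => |t| ^ a) (a * |y| ^ a / y) y := by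
  convert (hasDerivAt_abs hy).rpow_const (p := a) (Or.inl (abs_ne_zero.2 hy)) using 1
  rw [Real.rpow_sub_one (abs_ne_zero.2 hy)]
  rcases hy.lt_or_gt with h | h
  · simp only [abs_of_neg h, h, sign_neg, SignType.coe_neg, SignType.coe_one, neg_mul, one_mul]
    field_simp
  · simp only [abs_of_pos h, h, sign_pos, SignType.coe_one, one_mul]
    field_simp

theorem hasDerivAt_sqrt_sq_add_sq_left (x : ℝ) {y : ℝ} (hy : y ≠ 0) :
    HasDerivAt (fun t => √(t ^ 2 + y ^ 2)) (x / √(x ^ 2 + y ^ 2)) x := by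
  convert ((hasDerivAt_pow 2 x).add_const (y ^ 2)).sqrt (by positivity) using 1
  field_simp
  ring

theorem hasDerivAt_sqrt_sq_add_sq_right (x : ℝ) {y : ℝ} (hy : y ≠ 0) :
    HasDerivAt (fun t => √(x ^ 2 + t ^ 2)) (y / √(x ^ 2 + y ^ 2)) y := by
  convert ((hasDerivAt_pow 2 y).const_add (x ^ 2)).sqrt (by positivity) using 1
  field_simp
  ring

theorem hasDerivAt_rpow_sqrt_sq_add_sq_sub_left (s x : ℝ) {y : ℝ} (hy : y ≠ 0) :
    HasDerivAt (fun t => (√(t ^ 2 + y ^ 2) - t) ^ s)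
      (-s * (√(x ^ 2 + y ^ 2) - x) ^ s / √(x ^ 2 + y ^ 2)) x := by
  have hu := sqrt_sq_add_sq_sub_pos hy x
  have hr : 0 < √(x ^ 2 + y ^ 2) := Real.sqrt_pos.2 (by positivity)
  refine (((hasDerivAt_sqrt_sq_add_sq_left x hy).fun_sub (hasDerivAt_id' x)).rpow_const (p := s)
    (Or.inl hu.ne')).congr_deriv ?_
  rw [Real.rpow_sub_one hu.ne']
  field_simp
  ring

theorem hasDerivAt_rpow_sqrt_sq_add_sq_sub_right (s x : ℝ) {y : ℝ} (hy : y ≠ 0) :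
    HasDerivAt (fun t => (√(x ^ 2 + t ^ 2) - x) ^ s)
      (s * y * (√(x ^ 2 + y ^ 2) - x) ^ (s - 1) / √(x ^ 2 + y ^ 2)) y := by
  refine (((hasDerivAt_sqrt_sq_add_sq_right x hy).sub_const x).rpow_const (p := s)
    (Or.inl (sqrt_sq_add_sq_sub_pos hy x).ne')).congr_deriv ?_
  ring

theorem hasDerivAt_weighted_deriv_left (a s x : ℝ) {y : ℝ} (hy : y ≠ 0) :
    HasDerivAt (fun t => |y| ^ a * (-s * (√(t ^ 2 + y ^ 2) - t) ^ s / √(t ^ 2 + y ^ 2)))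
      (|y| ^ a * (s * (√(x ^ 2 + y ^ 2) - x) ^ s * (s * √(x ^ 2 + y ^ 2) + x)
        / √(x ^ 2 + y ^ 2) ^ 3)) x := by
  have hr : 0 < √(x ^ 2 + y ^ 2) := Real.sqrt_pos.2 (by positivity)
  refine ((((hasDerivAt_rpow_sqrt_sq_add_sq_sub_left s x hy).const_mul (-s)).div
    (hasDerivAt_sqrt_sq_add_sq_left x hy) hr.ne').const_mul _).congr_deriv ?_
  field_simp
  ring

theorem hasDerivAt_weighted_deriv_right {a s : ℝ} (has : a = 1 - 2 * s) (x : ℝ) {y : ℝ}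
    (hy : y ≠ 0) :
    HasDerivAt (fun t => |t| ^ a * (s * t * (√(x ^ 2 + t ^ 2) - x) ^ (s - 1) / √(x ^ 2 + t ^ 2)))
      (-(|y| ^ a * (s * (√(x ^ 2 + y ^ 2) - x) ^ s * (s * √(x ^ 2 + y ^ 2) + x)
        / √(x ^ 2 + y ^ 2) ^ 3))) y := by
  have hu := sqrt_sq_add_sq_sub_pos hy x
  have hr : 0 < √(x ^ 2 + y ^ 2) := Real.sqrt_pos.2 (by positivity)
  have hr2 : √(x ^ 2 + y ^ 2) ^ 2 = x ^ 2 + y ^ 2 := Real.sq_sqrt (by positivity)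
  have hflux := (((hasDerivAt_id' y).const_mul s).fun_mul
    (hasDerivAt_rpow_sqrt_sq_add_sq_sub_right (s - 1) x hy)).fun_div
    (hasDerivAt_sqrt_sq_add_sq_right x hy) hr.ne'
  refine ((hasDerivAt_abs_rpow_of_ne_zero a hy).fun_mul hflux).congr_deriv ?_
  rw [Real.rpow_sub_one hu.ne', Real.rpow_sub_one hu.ne', Real.rpow_sub_one hu.ne']
  generalize |y| ^ a = A
  generalize (√(x ^ 2 + y ^ 2) - x) ^ s = U
  subst has
  field_simp
  linear_combination s * A * U * ((2 - s) * √(x ^ 2 + y ^ 2) - x) * hr2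

theorem stmt_2_general (a s : ℝ) (hs : s = (1 - a) / 2)
    (w : ℝ → ℝ → ℝ)
    (hw : ∀ x y : ℝ, w x y = (Real.sqrt (x ^ 2 + y ^ 2) - x) ^ s) :
    ∀ x y : ℝ, y ≠ 0 →
      deriv (fun x' => |y| ^ a * deriv (fun t => w t y) x') x
        + deriv (fun y' => |y'| ^ a * deriv (fun t => w x t) y') y = 0 := by
  intro x y hy
  have hflux_x : (fun x' => |y| ^ a * deriv (fun t => w t y) x')
      = fun x' => |y| ^ a * (-s * (√(x' ^ 2 + y ^ 2) - x') ^ s / √(x' ^ 2 + y ^ 2)) := by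
    funext x'
    simp only [hw, (hasDerivAt_rpow_sqrt_sq_add_sq_sub_left s x' hy).deriv]
  have hflux_y : (fun y' => |y'| ^ a * deriv (fun t => w x t) y')
      =ᶠ[𝓝 y] fun y' =>
        |y'| ^ a * (s * y' * (√(x ^ 2 + y' ^ 2) - x) ^ (s - 1) / √(x ^ 2 + y' ^ 2)) := by
    filter_upwards [isOpen_ne.mem_nhds hy] with y' hy'
    simp only [hw, (hasDerivAt_rpow_sqrt_sq_add_sq_sub_right s x hy').deriv]
  rw [hflux_x, (hasDerivAt_weighted_deriv_left a s x hy).deriv, hflux_y.deriv_eq,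
    (hasDerivAt_weighted_deriv_right (by linarith) x hy).deriv]
  ring

/-- w(x,y) = (√(x²+y²) - x)^s is a-harmonic away from {y = 0}:
∂_x(|y|^a ∂_x w) + ∂_y(|y|^a ∂_y w) = 0 for y ≠ 0, where s = (1-a)/2. -/
theorem stmt_2 (a s : ℝ) (ha : a ∈ Set.Ioo (-1 : ℝ) 1) (hs : s = (1 - a) / 2)
    (w : ℝ → ℝ → ℝ)
    (hw : ∀ x y : ℝ, w x y = (Real.sqrt (x ^ 2 + y ^ 2) - x) ^ s) :
    ∀ x y : ℝ, y ≠ 0 →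
      deriv (fun x' => |y| ^ a * deriv (fun t => w t y) x') x
        + deriv (fun y' => |y'| ^ a * deriv (fun t => w x t) y') y = 0 :=
  stmt_2_general a s hs w hw
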